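/- For a quadratic foliation on ℂP² with nondegenerate singular points, the Baum-Bott relation fixing the sum of the indices ν(O_j) = λ_j/μ_j + μ_j/λ_j over all 7 singular points, combined with the Camacho-Sad relation ∑_{j=1}^{3} λ_j/μ_j = 1 at the three infinite singular points, shows that the image of the moduli map μ: v ↦ (ν(O_1), …, ν(O_7)) ∈ ℂ⁷ lies in an affine subvariety of dimension at most 5. -/
import Mathlib


open MvPolynomial

/-- Baum–Bott relation polynomial: `∑ ν_j - 2`. -/
noncomputable def Fbb : MvPolynomial (Fin 7) ℂ := (∑ j, X j) - C 2

/-- The eliminant of the Camacho–Sad relation at the three infinite points. -/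
noncomputable def Gcs : MvPolynomial (Fin 7) ℂ :=
  (((2 - (X 0 + X 1 + X 2)) ^ 2 + (X 2 ^ 2 - 4) - (X 0 ^ 2 - 4) - (X 1 ^ 2 - 4)) ^ 2
      - 4 * (X 0 ^ 2 - 4) * (X 1 ^ 2 - 4)
      - 4 * (2 - (X 0 + X 1 + X 2)) ^ 2 * (X 2 ^ 2 - 4)) ^ 2
    - 64 * (2 - (X 0 + X 1 + X 2)) ^ 2 * (X 0 ^ 2 - 4) * (X 1 ^ 2 - 4) * (X 2 ^ 2 - 4)

lemma elimCS (n0 n1 n2 s0 s1 s2 : ℂ) (h0 : n0 ^ 2 - 4 = s0 ^ 2) (h1 : n1 ^ 2 - 4 = s1 ^ 2)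
    (h2 : n2 ^ 2 - 4 = s2 ^ 2) (hc : 2 - (n0 + n1 + n2) = s0 + s1 + s2) :
    (((2 - (n0 + n1 + n2)) ^ 2 + (n2 ^ 2 - 4) - (n0 ^ 2 - 4) - (n1 ^ 2 - 4)) ^ 2
        - 4 * (n0 ^ 2 - 4) * (n1 ^ 2 - 4)
        - 4 * (2 - (n0 + n1 + n2)) ^ 2 * (n2 ^ 2 - 4)) ^ 2
      - 64 * (2 - (n0 + n1 + n2)) ^ 2 * (n0 ^ 2 - 4) * (n1 ^ 2 - 4) * (n2 ^ 2 - 4) = 0 := by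
  rw [h0, h1, h2, hc]; ring

lemma Fbb_irreducible : Irreducible Fbb := by
  rw [← MulEquiv.irreducible_iff (finSuccEquiv ℂ 6).toRingEquiv]
  have key : (finSuccEquiv ℂ 6).toRingEquiv Fbb
      = Polynomial.X - Polynomial.C (C 2 - (X 0 + X 1 + X 2 + X 3 + X 4 + X 5)) := by
    show (finSuccEquiv ℂ 6) Fbb = _
    have e1 : (X (1:Fin 7) : MvPolynomial (Fin 7) ℂ) = X (Fin.succ 0) := rfl
    have e2 : (X (2:Fin 7) : MvPolynomial (Fin 7) ℂ) = X (Fin.succ 1) := rfl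
    have e3 : (X (3:Fin 7) : MvPolynomial (Fin 7) ℂ) = X (Fin.succ 2) := rfl
    have e4 : (X (4:Fin 7) : MvPolynomial (Fin 7) ℂ) = X (Fin.succ 3) := rfl
    have e5 : (X (5:Fin 7) : MvPolynomial (Fin 7) ℂ) = X (Fin.succ 4) := rfl
    have e6 : (X (6:Fin 7) : MvPolynomial (Fin 7) ℂ) = X (Fin.succ 5) := rfl
    have hC : (finSuccEquiv ℂ 6) (C 2) = Polynomial.C (C 2) := by
      rw [show (C 2 : MvPolynomial (Fin 7) ℂ) = 2 from map_ofNat C 2,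
        show (Polynomial.C (C 2) : Polynomial (MvPolynomial (Fin 6) ℂ)) = 2 by
          rw [show (C 2 : MvPolynomial (Fin 6) ℂ) = 2 from map_ofNat C 2]
          exact map_ofNat Polynomial.C 2,
        map_ofNat]
    simp only [Fbb, Fin.sum_univ_seven, map_sub, map_add, e1, e2, e3, e4, e5, e6,
      finSuccEquiv_X_zero, finSuccEquiv_X_succ, hC]
    ring
  rw [key]
  exact Polynomial.irreducible_X_sub_C _

lemma Gcs_ne_zero : Gcs ≠ 0 := by
  intro h
  have := congrArg (eval (fun _ => (0 : ℂ))) h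
  simp only [Gcs, map_sub, map_add, map_mul, map_pow, eval_X, map_ofNat, map_zero] at this
  norm_num at this

lemma not_Fbb_dvd_Gcs : ¬ Fbb ∣ Gcs := by
  intro h
  set φ : MvPolynomial (Fin 7) ℂ →ₐ[ℂ] MvPolynomial (Fin 7) ℂ :=
    aeval (fun j : Fin 7 =>
      if j = 6 then (C 2 - (X 0 + X 1 + X 2 + X 3 + X 4 + X 5)) else X j) with hφ
  have hF : φ Fbb = 0 := by
    simp only [hφ, Fbb, Fin.sum_univ_seven, map_sub, map_add, aeval_X, map_ofNat,
      Fin.reduceEq, if_false, if_true, reduceIte]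
    rw [show ((2 : MvPolynomial (Fin 7) ℂ)) = C 2 from (map_ofNat C 2).symm]
    ring
  have hG : φ Gcs = Gcs := by
    simp only [hφ, Gcs, map_sub, map_add, map_mul, map_pow, aeval_X, map_ofNat,
      Fin.reduceEq, if_false, if_true, reduceIte]
  have hdvd : φ Fbb ∣ φ Gcs := map_dvd φ h
  rw [hF, hG, zero_dvd_iff] at hdvd
  exact Gcs_ne_zero hdvd

/-- For a quadratic foliation on `ℂP²` with its `7` nondegenerate singular
points (eigenvalues `λ_j, μ_j`, the first three at infinity with `μ_j` along
the line at infinity), the Baum-Bott relation `∑_{j=1}^{7} ν(O_j) = 2` with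
`ν(O_j) = λ_j/μ_j + μ_j/λ_j`, combined with the Camacho-Sad relation
`∑_{j=1}^{3} λ_j/μ_j = 1`, forces the image of the moduli map
`v ↦ (ν(O_1), …, ν(O_7)) ∈ ℂ⁷` to lie in an affine subvariety of dimension at
most `5`: there are two independent polynomial relations (an irreducible `F`
and a `G` not divisible by `F`) vanishing on the whole image. -/
theorem moduli_image_in_codim_two_subvariety :
    ∃ F G : MvPolynomial (Fin 7) ℂ,
      Irreducible F ∧ G ≠ 0 ∧ ¬ F ∣ G ∧
      ∀ lam mu : Fin 7 → ℂ, (∀ j, lam j ≠ 0) → (∀ j, mu j ≠ 0) →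
        (∑ j : Fin 7, (lam j / mu j + mu j / lam j)) = 2 →
        (∑ j : Fin 3, lam (Fin.castLE (by norm_num) j) / mu (Fin.castLE (by norm_num) j)) = 1 →
        eval (fun j => lam j / mu j + mu j / lam j) F = 0 ∧
          eval (fun j => lam j / mu j + mu j / lam j) G = 0 := by
  refine ⟨Fbb, Gcs, Fbb_irreducible, Gcs_ne_zero, not_Fbb_dvd_Gcs, ?_⟩
  intro lam mu hl hm hBB hCS
  set v : Fin 7 → ℂ := fun j => lam j / mu j + mu j / lam j with hv
  constructor
  · simp only [Fbb, map_sub, map_sum, eval_X, eval_C]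
    rw [hBB]; ring
  · -- Camacho–Sad elimination
    rw [Fin.sum_univ_three] at hCS
    have hCS' : lam 0 / mu 0 + lam 1 / mu 1 + lam 2 / mu 2 = 1 := hCS
    set x0 : ℂ := lam 0 / mu 0 with hx0
    set x1 : ℂ := lam 1 / mu 1 with hx1
    set x2 : ℂ := lam 2 / mu 2 with hx2
    have hx0' : x0 ≠ 0 := div_ne_zero (hl 0) (hm 0)
    have hx1' : x1 ≠ 0 := div_ne_zero (hl 1) (hm 1)
    have hx2' : x2 ≠ 0 := div_ne_zero (hl 2) (hm 2)
    have hv0 : v 0 = x0 + x0⁻¹ := by rw [hv, hx0, inv_div]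
    have hv1 : v 1 = x1 + x1⁻¹ := by rw [hv, hx1, inv_div]
    have hv2 : v 2 = x2 + x2⁻¹ := by rw [hv, hx2, inv_div]
    have h0 : v 0 ^ 2 - 4 = (x0 - x0⁻¹) ^ 2 := by
      rw [hv0]; field_simp; ring
    have h1 : v 1 ^ 2 - 4 = (x1 - x1⁻¹) ^ 2 := by
      rw [hv1]; field_simp; ring
    have h2 : v 2 ^ 2 - 4 = (x2 - x2⁻¹) ^ 2 := by
      rw [hv2]; field_simp; ring
    have hc : 2 - (v 0 + v 1 + v 2) = (x0 - x0⁻¹) + (x1 - x1⁻¹) + (x2 - x2⁻¹) := by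
      rw [hv0, hv1, hv2]; linear_combination (-2 : ℂ) * hCS'
    have hev : eval v Gcs =
        (((2 - (v 0 + v 1 + v 2)) ^ 2 + (v 2 ^ 2 - 4) - (v 0 ^ 2 - 4) - (v 1 ^ 2 - 4)) ^ 2
            - 4 * (v 0 ^ 2 - 4) * (v 1 ^ 2 - 4)
            - 4 * (2 - (v 0 + v 1 + v 2)) ^ 2 * (v 2 ^ 2 - 4)) ^ 2
          - 64 * (2 - (v 0 + v 1 + v 2)) ^ 2 * (v 0 ^ 2 - 4) * (v 1 ^ 2 - 4)
            * (v 2 ^ 2 - 4) := by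
      simp only [Gcs, map_sub, map_add, map_mul, map_pow, eval_X, map_ofNat]
    rw [hev]
    exact elimCS _ _ _ _ _ _ h0 h1 h2 hc
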